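/- arXiv:2503.08863 — 3 statements merged into one kernel-verified Lean document; each statement's English description precedes it below -/
import Mathlib

section
/- Let 0 < μ ≤ ε and let T be a finite set of 3D items with all dimensions in (0,1] such that each item has height at most μ and v(T) ≤ ε. Then T can be packed into the strip [0,1]×[0,1]×[0, 12ε]. -/
/-- The open region occupied by a 3D item of width `w`, depth `d`, height `h`
placed with its bottom-left-back corner at `(x, y, z)`. -/
def ItemRegion (w d h x y z : ℝ) : Set (ℝ × ℝ × ℝ) :=
  Set.Ioo x (x + w) ×ˢ (Set.Ioo y (y + d) ×ˢ Set.Ioo z (z + h))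

/-- `IsPacking T w d h W D H x y z` : the placement `(x, y, z)` is a feasible
axis-aligned non-overlapping packing of the items of `T` (with dimensions
`w`, `d`, `h`) into the box `[0,W] × [0,D] × [0,H]`. -/
def IsPacking {ι : Type*} (T : Finset ι) (w d h : ι → ℝ) (W D H : ℝ)
    (x y z : ι → ℝ) : Prop :=
  (∀ i ∈ T, 0 ≤ x i ∧ x i + w i ≤ W ∧ 0 ≤ y i ∧ y i + d i ≤ D ∧
      0 ≤ z i ∧ z i + h i ≤ H) ∧
  (∀ i ∈ T, ∀ j ∈ T, i ≠ j →
    Disjoint (ItemRegion (w i) (d i) (h i) (x i) (y i) (z i))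
             (ItemRegion (w j) (d j) (h j) (x j) (y j) (z j)))

/-- The items of `T` can be packed into the box `[0,W] × [0,D] × [0,H]`. -/
def CanPack {ι : Type*} (T : Finset ι) (w d h : ι → ℝ) (W D H : ℝ) : Prop :=
  ∃ x y z : ι → ℝ, IsPacking T w d h W D H x y z

/-!
Sort the items into four classes according to whether `d > 1/4` and whether `w > 1/2`, and give
each class its own stack of layers along `z`. Within a class the items are taken by decreasing
height and put greedily into layers (next fit decreasing); a layer is a row along `x` or `y`, or,
for items with `w ≤ 1/2` and `d ≤ 1/4`, a 2D next-fit-decreasing-height shelf packing. In every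
class a layer is closed only once its base area is at least `1/8`, and the next layer is no taller
than the items of the closed one, so the layers of a class reach height at most
`μ + 8 · volume`. The four classes together need `4μ + 8ε ≤ 12ε`.
-/

section Geometry

variable {w d h x y z w' d' h' x' y' z' : ℝ}

lemma itemRegion_rotate :
    ItemRegion d h w y z x =
      (fun p : ℝ × ℝ × ℝ => (p.2.2, p.1, p.2.1)) ⁻¹' ItemRegion w d h x y z := by
  ext ⟨a, b, c⟩
  simp only [ItemRegion, Set.mem_prod, Set.mem_preimage]
  tauto

lemma itemRegion_add_z (c : ℝ) :
    ItemRegion w d h x y (z + c) =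
      (fun p : ℝ × ℝ × ℝ => (p.1, p.2.1, p.2.2 - c)) ⁻¹' ItemRegion w d h x y z := by
  ext ⟨a, b, e⟩
  simp only [ItemRegion, Set.mem_prod, Set.mem_preimage, Set.mem_Ioo, lt_sub_iff_add_lt,
    sub_lt_iff_lt_add, add_right_comm z h c]

lemma disjoint_itemRegion_of_add_le_z (hz : z + h ≤ z') :
    Disjoint (ItemRegion w d h x y z) (ItemRegion w' d' h' x' y' z') :=
  Set.disjoint_left.2 fun _ ⟨_, _, _, hp⟩ ⟨_, _, hq, _⟩ => by linarith

end Geometry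

section Packing

variable {ι : Type*} {T T₁ T₂ : Finset ι} {w d h : ι → ℝ} {W D H W' D' H' H₁ H₂ : ℝ}

lemma canPack_empty : CanPack (∅ : Finset ι) w d h W D H :=
  ⟨0, 0, 0, by simp, by simp⟩

lemma canPack_singleton {i : ι} (hw : w i ≤ W) (hd : d i ≤ D) (hh : h i ≤ H) :
    CanPack {i} w d h W D H :=
  ⟨0, 0, 0, by simpa [IsPacking] using ⟨hw, hd, hh⟩⟩

lemma CanPack.mono (hp : CanPack T w d h W D H) (hW : W ≤ W') (hD : D ≤ D') (hH : H ≤ H') :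
    CanPack T w d h W' D' H' := by
  obtain ⟨x, y, z, hbox, hdisj⟩ := hp
  refine ⟨x, y, z, fun i hi => ?_, hdisj⟩
  obtain ⟨h₁, h₂, h₃, h₄, h₅, h₆⟩ := hbox i hi
  exact ⟨h₁, h₂.trans hW, h₃, h₄.trans hD, h₅, h₆.trans hH⟩

lemma CanPack.rotate (hp : CanPack T w d h W D H) : CanPack T d h w D H W := by
  obtain ⟨x, y, z, hbox, hdisj⟩ := hp
  refine ⟨y, z, x, fun i hi => ?_, fun i hi j hj hij => ?_⟩
  · obtain ⟨h₁, h₂, h₃, h₄, h₅, h₆⟩ := hbox i hi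
    exact ⟨h₃, h₄, h₅, h₆, h₁, h₂⟩
  · have := (hdisj i hi j hj hij).preimage fun p : ℝ × ℝ × ℝ => (p.2.2, p.1, p.2.1)
    rwa [← itemRegion_rotate, ← itemRegion_rotate] at this

variable [DecidableEq ι]

-- `T₁` and `T₂` may overlap: shared items keep their place from the first packing.
lemma CanPack.union_z (hH₁ : 0 ≤ H₁) (hH₂ : 0 ≤ H₂)
    (h₁ : CanPack T₁ w d h W D H₁) (h₂ : CanPack T₂ w d h W D H₂) :
    CanPack (T₁ ∪ T₂) w d h W D (H₁ + H₂) := by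
  obtain ⟨x₁, y₁, z₁, hbox₁, hdisj₁⟩ := h₁
  obtain ⟨x₂, y₂, z₂, hbox₂, hdisj₂⟩ := h₂
  have mem₂ {i} (hi : i ∈ T₁ ∪ T₂) (hi₁ : i ∉ T₁) : i ∈ T₂ :=
    (Finset.mem_union.1 hi).resolve_left hi₁
  have below : ∀ i ∈ T₁, ∀ j ∈ T₂,
      Disjoint (ItemRegion (w i) (d i) (h i) (x₁ i) (y₁ i) (z₁ i))
        (ItemRegion (w j) (d j) (h j) (x₂ j) (y₂ j) (z₂ j + H₁)) := fun i hi j hj =>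
    disjoint_itemRegion_of_add_le_z (by linarith [(hbox₁ i hi).2.2.2.2.2, (hbox₂ j hj).2.2.2.2.1])
  refine ⟨T₁.piecewise x₁ x₂, T₁.piecewise y₁ y₂, T₁.piecewise z₁ (z₂ · + H₁),
    fun i hi => ?_, fun i hi j hj hij => ?_⟩
  · by_cases hi₁ : i ∈ T₁
    · obtain ⟨h₁, h₂, h₃, h₄, h₅, h₆⟩ := hbox₁ i hi₁
      simp only [Finset.piecewise_eq_of_mem _ _ _ hi₁]
      exact ⟨h₁, h₂, h₃, h₄, h₅, by linarith⟩
    · obtain ⟨h₁, h₂, h₃, h₄, h₅, h₆⟩ := hbox₂ i (mem₂ hi hi₁)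
      simp only [Finset.piecewise_eq_of_notMem _ _ _ hi₁]
      exact ⟨h₁, h₂, h₃, h₄, by linarith, by linarith⟩
  · by_cases hi₁ : i ∈ T₁ <;> by_cases hj₁ : j ∈ T₁ <;>
      simp only [Finset.piecewise_eq_of_mem, Finset.piecewise_eq_of_notMem, hi₁, hj₁,
        not_false_eq_true]
    · exact hdisj₁ i hi₁ j hj₁ hij
    · exact below i hi₁ j (mem₂ hj hj₁)
    · exact (below j hj₁ i (mem₂ hi hi₁)).symm
    · have := (hdisj₂ i (mem₂ hi hi₁) j (mem₂ hj hj₁) hij).preimage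
        fun p : ℝ × ℝ × ℝ => (p.1, p.2.1, p.2.2 - H₁)
      rwa [← itemRegion_add_z, ← itemRegion_add_z] at this

end Packing

section Stackable

variable {ι κ : Type*} [DecidableEq ι]

/-- `P S a` reads: the items of `S` fit into a slab of thickness `a` (along a fixed axis). -/
structure IsStackable (P : Finset ι → ℝ → Prop) : Prop where
  empty : P ∅ 0
  mono {S : Finset ι} {a b : ℝ} : P S a → a ≤ b → P S b
  union {S S' : Finset ι} {a b : ℝ} : 0 ≤ a → 0 ≤ b → P S a → P S' b → P (S ∪ S') (a + b)

variable {P : Finset ι → ℝ → Prop}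

lemma IsStackable.biUnion (hP : IsStackable P) {s : Finset κ} {F : κ → Finset ι} {a : κ → ℝ}
    (ha : ∀ b ∈ s, 0 ≤ a b) (hF : ∀ b ∈ s, P (F b) (a b)) :
    P (s.biUnion F) (∑ b ∈ s, a b) := by
  classical
  induction s using Finset.induction_on with
  | empty => simpa using hP.empty
  | insert b s hb ih =>
    rw [Finset.biUnion_insert, Finset.sum_insert hb]
    refine hP.union (ha b (Finset.mem_insert_self b s)) ?_ (hF b (Finset.mem_insert_self b s))
      (ih (fun c hc => ha c (Finset.mem_insert_of_mem hc))
        fun c hc => hF c (Finset.mem_insert_of_mem hc))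
    exact Finset.sum_nonneg fun c hc => ha c (Finset.mem_insert_of_mem hc)

lemma IsStackable.of_singletons (hP : IsStackable P) {S : Finset ι} {a : ι → ℝ}
    (ha : ∀ i ∈ S, 0 ≤ a i) (hS : ∀ i ∈ S, P {i} (a i)) : P S (∑ i ∈ S, a i) := by
  simpa only [Finset.biUnion_singleton_eq_self] using hP.biUnion ha hS

lemma IsStackable.fiberwise [Fintype κ] [DecidableEq κ] (hP : IsStackable P) {T : Finset ι}
    (g : ι → κ) {a : κ → ℝ} (ha : ∀ b, 0 ≤ a b) (hT : ∀ b, P (T.filter (g · = b)) (a b)) :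
    P T (∑ b, a b) := by
  simpa only [Finset.biUnion_filter_eq_of_maps_to fun i _ => Finset.mem_univ (g i)] using
    hP.biUnion (s := Finset.univ) (fun b _ => ha b) fun b _ => hT b

variable {w d h : ι → ℝ} {W D H : ℝ}

lemma isStackable_canPack_z : IsStackable (fun S a => CanPack S w d h W D a) :=
  ⟨canPack_empty, fun hp hab => hp.mono le_rfl le_rfl hab, fun ha hb h₁ h₂ => h₁.union_z ha hb h₂⟩

lemma isStackable_canPack_y : IsStackable (fun S a => CanPack S w d h W a H) :=
  ⟨canPack_empty, fun hp hab => hp.mono le_rfl hab le_rfl,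
    fun ha hb h₁ h₂ => (h₁.rotate.rotate.union_z ha hb h₂.rotate.rotate).rotate⟩

lemma isStackable_canPack_x : IsStackable (fun S a => CanPack S w d h a D H) :=
  ⟨canPack_empty, fun hp hab => hp.mono hab le_rfl le_rfl,
    fun ha hb h₁ h₂ => (h₁.rotate.union_z ha hb h₂.rotate).rotate.rotate⟩

lemma canPack_row_x {S : Finset ι} (hS : ∀ i ∈ S, 0 ≤ w i ∧ d i ≤ D ∧ h i ≤ H) :
    CanPack S w d h (∑ i ∈ S, w i) D H :=
  isStackable_canPack_x.of_singletons (fun i hi => (hS i hi).1)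
    fun i hi => canPack_singleton le_rfl (hS i hi).2.1 (hS i hi).2.2

lemma canPack_row_y {S : Finset ι} (hS : ∀ i ∈ S, 0 ≤ d i ∧ w i ≤ W ∧ h i ≤ H) :
    CanPack S w d h W (∑ i ∈ S, d i) H :=
  isStackable_canPack_y.of_singletons (fun i hi => (hS i hi).1)
    fun i hi => canPack_singleton (hS i hi).2.1 le_rfl (hS i hi).2.2

end Stackable

section NextFitDecreasing

variable {ι : Type*}

lemma exists_nextFit_split (f : ι → ℝ) :
    ∀ (L : List ι) {c : ℝ}, 0 ≤ c →
      ∃ G R, L = G ++ R ∧ (G.map f).sum ≤ c ∧ ∀ j ∈ R.head?, c < (G.map f).sum + f j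
  | [], _, hc => ⟨[], [], rfl, by simpa using hc, by simp⟩
  | a :: L, c, hc => by
    by_cases ha : f a ≤ c
    · obtain ⟨G, R, rfl, hG, hR⟩ := exists_nextFit_split f L (c := c - f a) (by linarith)
      refine ⟨a :: G, R, rfl, by simp only [List.map_cons, List.sum_cons]; linarith,
        fun j hj => ?_⟩
      simp only [List.map_cons, List.sum_cons]
      linarith [hR j hj]
    · exact ⟨[], a :: L, rfl, by simpa using hc, fun j hj => by simp_all⟩

variable [DecidableEq ι] {P : Finset ι → ℝ → Prop} {C : Finset ι} {f g t : ι → ℝ} {c κ : ℝ}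

lemma IsStackable.nextFit_list (hP : IsStackable P) (hκ : 0 < κ) (hc : 0 ≤ c)
    (hf : ∀ i ∈ C, f i ≤ c) (hgt : ∀ i ∈ C, 0 ≤ g i ∧ 0 ≤ t i)
    (hgroup : ∀ S ⊆ C, ∀ τ, 0 ≤ τ → (∀ i ∈ S, t i ≤ τ) → ∑ i ∈ S, f i ≤ c → P S τ)
    (harea : ∀ S ⊆ C, ∀ j ∈ C, ∑ i ∈ S, f i ≤ c → c < ∑ i ∈ S, f i + f j →
      κ ≤ ∑ i ∈ S, g i)
    (L : List ι) (hnd : L.Nodup) (hsort : L.Pairwise fun a b => t b ≤ t a)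
    (hLC : ∀ i ∈ L, i ∈ C) {τ : ℝ} (hτ : 0 ≤ τ) (htτ : ∀ i ∈ L, t i ≤ τ) :
    P L.toFinset (τ + κ⁻¹ * ∑ i ∈ L.toFinset, g i * t i) := by
  induction hn : L.length using Nat.strong_induction_on generalizing L τ with
  | _ n ih =>
  have hvol : ∀ S ⊆ C, 0 ≤ κ⁻¹ * ∑ i ∈ S, g i * t i := fun S hS =>
    mul_nonneg (inv_nonneg.2 hκ.le)
      (Finset.sum_nonneg fun i hi => mul_nonneg (hgt i (hS hi)).1 (hgt i (hS hi)).2)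
  obtain ⟨G, R, rfl, hGf, hnext⟩ := exists_nextFit_split f L hc
  obtain ⟨hndG, hndR, hGR⟩ := List.nodup_append.1 hnd
  obtain ⟨-, hsortR, hcross⟩ := List.pairwise_append.1 hsort
  have hGC : G.toFinset ⊆ C := fun i hi =>
    hLC i (List.mem_append_left _ (List.mem_toFinset.1 hi))
  have hGf' : ∑ i ∈ G.toFinset, f i ≤ c := by rwa [List.sum_toFinset _ hndG]
  have hGP : P G.toFinset τ := hgroup _ hGC τ hτ
    (fun i hi => htτ i (List.mem_append_left _ (List.mem_toFinset.1 hi))) hGf'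
  rcases R with _ | ⟨j, R⟩
  · simpa only [List.append_nil] using hP.mono hGP (le_add_of_nonneg_right (hvol _ hGC))
  have hjC : j ∈ C := hLC j (by simp)
  have hRC : (j :: R).toFinset ⊆ C := fun i hi =>
    hLC i (List.mem_append_right _ (List.mem_toFinset.1 hi))
  have hG : G ≠ [] := by
    rintro rfl
    have := hnext j rfl
    simp only [List.map_nil, List.sum_nil, zero_add] at this
    linarith [hf j hjC]
  have hRP := ih (j :: R).length (by simp [← hn, List.length_pos_iff.2 hG]) (j :: R) hndR
    hsortR (fun i hi => hRC (List.mem_toFinset.2 hi)) (hgt j hjC).2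
    (fun i hi => (List.mem_cons.1 hi).elim (fun h => h ▸ le_rfl)
      fun hi => List.rel_of_pairwise_cons hsortR hi) rfl
  -- the group `G` was closed by `j`, so its base is well filled and all its items are taller
  have hclosed : κ * t j ≤ ∑ i ∈ G.toFinset, g i * t i :=
    calc κ * t j ≤ (∑ i ∈ G.toFinset, g i) * t j := by
          refine mul_le_mul_of_nonneg_right (harea _ hGC j hjC hGf' ?_) (hgt j hjC).2
          simpa only [List.sum_toFinset _ hndG] using hnext j rfl
      _ = ∑ i ∈ G.toFinset, g i * t j := Finset.sum_mul _ _ _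
      _ ≤ ∑ i ∈ G.toFinset, g i * t i := Finset.sum_le_sum fun i hi =>
          mul_le_mul_of_nonneg_left (hcross i (List.mem_toFinset.1 hi) j (by simp))
            (hgt i (hGC hi)).1
  have hdisj : Disjoint G.toFinset (j :: R).toFinset :=
    List.disjoint_toFinset_iff_disjoint.2 fun i hiG hiR => hGR i hiG i hiR rfl
  rw [List.toFinset_append, Finset.sum_union hdisj, mul_add]
  refine hP.mono (hP.union hτ (add_nonneg (hgt j hjC).2 (hvol _ hRC)) hGP hRP) ?_
  linarith [(le_inv_mul_iff₀ hκ).2 hclosed]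

lemma IsStackable.nextFitDecreasing (hP : IsStackable P) (hκ : 0 < κ) (hc : 0 ≤ c)
    (hf : ∀ i ∈ C, f i ≤ c) (hgt : ∀ i ∈ C, 0 ≤ g i ∧ 0 ≤ t i)
    (hgroup : ∀ S ⊆ C, ∀ τ, 0 ≤ τ → (∀ i ∈ S, t i ≤ τ) → ∑ i ∈ S, f i ≤ c → P S τ)
    (harea : ∀ S ⊆ C, ∀ j ∈ C, ∑ i ∈ S, f i ≤ c → c < ∑ i ∈ S, f i + f j →
      κ ≤ ∑ i ∈ S, g i)
    {τ : ℝ} (hτ : 0 ≤ τ) (htτ : ∀ i ∈ C, t i ≤ τ) :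
    P C (τ + κ⁻¹ * ∑ i ∈ C, g i * t i) := by
  set L := C.toList.mergeSort fun a b => decide (t b ≤ t a)
  have hperm : L.Perm C.toList := List.mergeSort_perm _ _
  have hLC : L.toFinset = C := by
    rw [List.toFinset_eq_of_perm _ _ hperm, Finset.toList_toFinset]
  have hsort : L.Pairwise fun a b => t b ≤ t a := by
    simpa using List.pairwise_mergeSort (le := fun a b => decide (t b ≤ t a))
      (fun a b c hab hbc => by simp only [decide_eq_true_eq] at *; linarith)
      (fun a b => by simpa using le_total (t b) (t a)) C.toList
  have hmem : ∀ i ∈ L, i ∈ C := fun i hi => by simpa using hperm.mem_iff.1 hi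
  simpa only [hLC] using hP.nextFit_list hκ hc hf hgt hgroup harea L
    (hperm.nodup_iff.2 C.nodup_toList) hsort hmem hτ fun i hi => htτ i (hmem i hi)

end NextFitDecreasing

section Classes

variable {ι : Type*} [DecidableEq ι] {w d h : ι → ℝ} {C : Finset ι} {μ : ℝ}

lemma canPack_nfdh {S : Finset ι} {D₁ H : ℝ} (hD₁ : 0 ≤ D₁)
    (hS : ∀ i ∈ S, 0 ≤ w i ∧ w i ≤ 1 / 2 ∧ 0 ≤ d i ∧ d i ≤ D₁ ∧ h i ≤ H) :
    CanPack S w d h 1 (D₁ + 2 * ∑ i ∈ S, w i * d i) H := by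
  convert isStackable_canPack_y.nextFitDecreasing (f := w) (g := w) (c := 1) (κ := 1 / 2)
    (by norm_num) zero_le_one (fun i hi => by linarith [hS i hi])
    (fun i hi => ⟨(hS i hi).1, (hS i hi).2.2.1⟩)
    (fun S' hS' τ _ hdτ hw => (canPack_row_x fun i hi =>
      ⟨(hS i (hS' hi)).1, hdτ i hi, (hS i (hS' hi)).2.2.2.2⟩).mono hw le_rfl le_rfl)
    (fun _ _ j hj _ hnext => by linarith [(hS j hj).2.1]) hD₁ (fun i hi => (hS i hi).2.2.2.1)
    using 2
  norm_num

lemma canPack_layers (f : ι → ℝ) {c : ℝ} (hc : 0 ≤ c) (hμ : 0 ≤ μ) (hf : ∀ i ∈ C, f i ≤ c)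
    (hdim : ∀ i ∈ C, 0 ≤ w i * d i ∧ 0 ≤ h i ∧ h i ≤ μ)
    (hlayer : ∀ S ⊆ C, ∀ τ, 0 ≤ τ → (∀ i ∈ S, h i ≤ τ) → ∑ i ∈ S, f i ≤ c →
      CanPack S w d h 1 1 τ)
    (harea : ∀ S ⊆ C, ∀ j ∈ C, ∑ i ∈ S, f i ≤ c → c < ∑ i ∈ S, f i + f j →
      1 / 8 ≤ ∑ i ∈ S, w i * d i) :
    CanPack C w d h 1 1 (μ + 8 * ∑ i ∈ C, w i * d i * h i) := by
  convert isStackable_canPack_z.nextFitDecreasing (g := fun i => w i * d i) (κ := 1 / 8)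
    (by norm_num) hc hf (fun i hi => ⟨(hdim i hi).1, (hdim i hi).2.1⟩) hlayer harea hμ
    (fun i hi => (hdim i hi).2.2) using 2
  norm_num

lemma canPack_deep_narrow (hμ : 0 ≤ μ) (hh : ∀ i ∈ C, 0 ≤ h i ∧ h i ≤ μ)
    (hC : ∀ i ∈ C, 0 ≤ w i ∧ w i ≤ 1 / 2 ∧ 1 / 4 < d i ∧ d i ≤ 1) :
    CanPack C w d h 1 1 (μ + 8 * ∑ i ∈ C, w i * d i * h i) := by
  refine canPack_layers w zero_le_one hμ (fun i hi => by linarith [hC i hi])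
    (fun i hi => ⟨by nlinarith [hC i hi], hh i hi⟩)
    (fun S hS τ _ hhτ hw => (canPack_row_x fun i hi =>
      ⟨(hC i (hS hi)).1, (hC i (hS hi)).2.2.2, hhτ i hi⟩).mono hw le_rfl le_rfl)
    fun S hS j hj _ hnext => ?_
  calc (1 / 8 : ℝ) ≤ (∑ i ∈ S, w i) * (1 / 4) := by linarith [hC j hj]
    _ = ∑ i ∈ S, w i * (1 / 4) := Finset.sum_mul _ _ _
    _ ≤ ∑ i ∈ S, w i * d i := Finset.sum_le_sum fun i hi =>
        mul_le_mul_of_nonneg_left (hC i (hS hi)).2.2.1.le (hC i (hS hi)).1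

lemma canPack_deep_wide (hμ : 0 ≤ μ) (hh : ∀ i ∈ C, 0 ≤ h i ∧ h i ≤ μ)
    (hC : ∀ i ∈ C, 1 / 2 < w i ∧ w i ≤ 1 ∧ 1 / 4 < d i ∧ d i ≤ 1) :
    CanPack C w d h 1 1 (μ + 8 * ∑ i ∈ C, w i * d i * h i) := by
  have hwd : ∀ i ∈ C, 1 / 8 ≤ w i * d i := fun i hi => by nlinarith [hC i hi]
  refine canPack_layers w zero_le_one hμ (fun i hi => (hC i hi).2.1)
    (fun i hi => ⟨by linarith [hwd i hi], hh i hi⟩)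
    (fun S hS τ _ hhτ hw => (canPack_row_x fun i hi =>
      ⟨by linarith [hC i (hS hi)], (hC i (hS hi)).2.2.2, hhτ i hi⟩).mono hw le_rfl le_rfl)
    fun S hS j hj _ hnext => ?_
  -- a closed layer is not empty, and one deep wide item already has base area `1 / 8`
  obtain ⟨i, hi⟩ : S.Nonempty := by
    rw [Finset.nonempty_iff_ne_empty]
    rintro rfl
    linarith [(hC j hj).2.1, Finset.sum_empty (f := w) ▸ hnext]
  exact (hwd i (hS hi)).trans
    (Finset.single_le_sum (f := fun k => w k * d k) (fun k hk => by linarith [hwd k (hS hk)]) hi)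

lemma canPack_shallow_narrow (hμ : 0 ≤ μ) (hh : ∀ i ∈ C, 0 ≤ h i ∧ h i ≤ μ)
    (hC : ∀ i ∈ C, 0 ≤ w i ∧ w i ≤ 1 / 2 ∧ 0 ≤ d i ∧ d i ≤ 1 / 4) :
    CanPack C w d h 1 1 (μ + 8 * ∑ i ∈ C, w i * d i * h i) := by
  have hwd : ∀ i ∈ C, 0 ≤ w i * d i ∧ w i * d i ≤ 1 / 8 := fun i hi => by
    obtain ⟨hw₀, hw, hd₀, hd⟩ := hC i hi
    exact ⟨mul_nonneg hw₀ hd₀, by nlinarith⟩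
  refine canPack_layers (fun i => w i * d i) (c := 1 / 4) (by norm_num) hμ
    (fun i hi => by linarith [hwd i hi]) (fun i hi => ⟨(hwd i hi).1, hh i hi⟩)
    (fun S hS τ _ hhτ hsum => ?_) fun S hS j hj _ hnext => by linarith [hwd j hj]
  refine (canPack_nfdh (D₁ := 1 / 4) (by norm_num) fun i hi => ?_).mono le_rfl
    (by linarith) le_rfl
  obtain ⟨hw₀, hw, hd₀, hd⟩ := hC i (hS hi)
  exact ⟨hw₀, hw, hd₀, hd, hhτ i hi⟩

lemma canPack_shallow_wide (hμ : 0 ≤ μ) (hh : ∀ i ∈ C, 0 ≤ h i ∧ h i ≤ μ)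
    (hC : ∀ i ∈ C, 1 / 2 < w i ∧ w i ≤ 1 ∧ 0 ≤ d i ∧ d i ≤ 1 / 4) :
    CanPack C w d h 1 1 (μ + 8 * ∑ i ∈ C, w i * d i * h i) := by
  refine canPack_layers d zero_le_one hμ (fun i hi => by linarith [hC i hi])
    (fun i hi => ⟨by nlinarith [hC i hi], hh i hi⟩)
    (fun S hS τ _ hhτ hd => (canPack_row_y fun i hi =>
      ⟨(hC i (hS hi)).2.2.1, (hC i (hS hi)).2.1, hhτ i hi⟩).mono le_rfl hd le_rfl)
    fun S hS j hj _ hnext => ?_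
  calc (1 / 8 : ℝ) ≤ 1 / 2 * ∑ i ∈ S, d i := by linarith [hC j hj]
    _ = ∑ i ∈ S, 1 / 2 * d i := Finset.mul_sum _ _ _
    _ ≤ ∑ i ∈ S, w i * d i := Finset.sum_le_sum fun i hi =>
        mul_le_mul_of_nonneg_right (hC i (hS hi)).1.le (hC i (hS hi)).2.2.1

end Classes

/-- If `0 < μ ≤ ε` and `T` is a finite set of 3D items with
all dimensions in `(0,1]`, height at most `μ`, and total volume at most `ε`,
then `T` packs into the strip `[0,1] × [0,1] × [0, 12ε]`. -/
theorem stmt16 {ι : Type*} (T : Finset ι) (w d h : ι → ℝ) (μ ε : ℝ)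
    (hμpos : 0 < μ) (hμε : μ ≤ ε)
    (hdims : ∀ i ∈ T, 0 < w i ∧ w i ≤ 1 ∧ 0 < d i ∧ d i ≤ 1 ∧
      0 < h i ∧ h i ≤ μ)
    (hvol : ∑ i ∈ T, w i * d i * h i ≤ ε) :
    CanPack T w d h 1 1 (12 * ε) := by
  classical
  let kind : ι → Bool × Bool := fun i => (decide (1 / 4 < d i), decide (1 / 2 < w i))
  have hh : ∀ b, ∀ i ∈ T.filter (kind · = b), 0 ≤ h i ∧ h i ≤ μ := fun b i hi =>
    have hi := hdims i (Finset.mem_filter.1 hi).1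
    ⟨hi.2.2.2.2.1.le, hi.2.2.2.2.2⟩
  have hclass : ∀ b, CanPack (T.filter (kind · = b)) w d h 1 1
      (μ + 8 * ∑ i ∈ T.filter (kind · = b), w i * d i * h i) := by
    rintro ⟨_ | _, _ | _⟩ <;>
      [refine canPack_shallow_narrow hμpos.le (hh _) fun i hi => ?_;
       refine canPack_shallow_wide hμpos.le (hh _) fun i hi => ?_;
       refine canPack_deep_narrow hμpos.le (hh _) fun i hi => ?_;
       refine canPack_deep_wide hμpos.le (hh _) fun i hi => ?_] <;>
      (obtain ⟨hiT, hi⟩ := Finset.mem_filter.1 hi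
       simp only [kind, Prod.mk.injEq, decide_eq_true_eq, decide_eq_false_iff_not, not_lt] at hi
       obtain ⟨_, _, _, _, -⟩ := hdims i hiT
       refine ⟨?_, ?_, ?_, ?_⟩ <;> linarith [hi.1, hi.2])
  have hstack := isStackable_canPack_z.fiberwise kind
    (fun b => add_nonneg hμpos.le (mul_nonneg (by norm_num) (Finset.sum_nonneg fun i hi => by
      obtain ⟨_, -, _, -, _, -⟩ := hdims i (Finset.mem_filter.1 hi).1
      positivity))) hclass
  rw [Finset.sum_add_distrib, ← Finset.mul_sum, Finset.sum_fiberwise] at hstack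
  refine hstack.mono le_rfl le_rfl ?_
  simp only [Finset.sum_const, Finset.card_univ, Fintype.card_prod, Fintype.card_bool,
    nsmul_eq_mul]
  norm_num
  linarith
end

section
/- Let J be a set of n ≥ 1 3D items with all dimensions in (0,1] that can be packed into the unit cube [0,1]^3, and let μ ∈ (0,1] be such that μ·n is an even positive integer (so μ^2/2 is an integer multiple of μ/n). Call an item large if its width, depth and height all exceed μ. Let J' be the instance obtained from J by rounding the height of every non-large item up to the next integer multiple of μ/n and the height of every large item up to the next integer multiple of μ^2/2. Then J' can be packed into the box [0,1]×[0,1]×[0, 1+2μ] such that every item is placed at a z-coordinate that is an integer multiple of μ/n and every large item is placed at a z-coordinate that is an integer multiple of μ^2/2. -/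
/-! Take a packing of `J` into the unit cube and lower the items onto grids in the order of their
original `z`-coordinates: each item goes to the first point of its grid (multiples of `μ²/2` for
large items, of `μ/n` for the others) above the new tops of the items that lay entirely below it.
Items whose footprints overlap keep their vertical order, so this is again a packing. Growth is
controlled by the invariant

  new top of `i` ≤ `(1 + μ) · (old top of i) + (μ/n) · #{small k : old top of k ≤ old top of i}`.

A large item is lifted by at most `μ²/2` onto its grid and grows by at most `μ²/2` in rounding,
together at most `μ · h i` as `h i > μ`. A small item is not lifted at all, because all new tops
are multiples of `μ/n` (this is where `μ n` even is used: `μ²/2` is then a multiple of `μ/n`), and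
it grows by at most `μ/n`, which the counter pays for. As at most `n` items are small, all
new tops stay below `1 + 2μ`. -/

open Finset AddSubmonoid

lemma Finset.fold_max_induction {α β : Type*} [LinearOrder β] {p : β → Prop} {s : Finset α}
    {f : α → β} {b : β} (hb : p b) (hf : ∀ a ∈ s, p (f a)) : p (s.fold max b f) := by
  classical
  induction s using Finset.induction_on with
  | empty => exact hb
  | insert a s ha ih =>
    rw [fold_insert ha]
    rcases max_choice (f a) (s.fold max b f) with h | h <;> rw [h]
    · exact hf a (mem_insert_self a s)
    · exact ih fun a' ha' => hf a' (mem_insert_of_mem ha')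

section NatCeil
variable {x γ : ℝ}

lemma le_natCeil_div_mul (hγ : 0 < γ) : x ≤ ⌈x / γ⌉₊ * γ :=
  (div_le_iff₀ hγ).mp (Nat.le_ceil _)

lemma natCeil_div_mul_lt (hx : 0 ≤ x) (hγ : 0 < γ) : ⌈x / γ⌉₊ * γ < x + γ :=
  calc ⌈x / γ⌉₊ * γ < (x / γ + 1) * γ :=
        mul_lt_mul_of_pos_right (Nat.ceil_lt_add_one (div_nonneg hx hγ.le)) hγ
    _ = x + γ := by field_simp

lemma natCeil_div_mul_mem_multiples (x γ : ℝ) : ⌈x / γ⌉₊ * γ ∈ multiples γ :=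
  ⟨⌈x / γ⌉₊, nsmul_eq_mul _ _⟩

lemma natCeil_div_mul_eq_of_mem_multiples (hγ : γ ≠ 0) (hx : x ∈ multiples γ) :
    ⌈x / γ⌉₊ * γ = x := by
  obtain ⟨n, rfl⟩ := hx
  simp [nsmul_eq_mul, hγ]

end NatCeil

lemma disjoint_itemRegion_iff {w₁ d₁ h₁ x₁ y₁ z₁ w₂ d₂ h₂ x₂ y₂ z₂ : ℝ} :
    Disjoint (ItemRegion w₁ d₁ h₁ x₁ y₁ z₁) (ItemRegion w₂ d₂ h₂ x₂ y₂ z₂) ↔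
      Disjoint (Set.Ioo x₁ (x₁ + w₁)) (Set.Ioo x₂ (x₂ + w₂)) ∨
      Disjoint (Set.Ioo y₁ (y₁ + d₁)) (Set.Ioo y₂ (y₂ + d₂)) ∨
      Disjoint (Set.Ioo z₁ (z₁ + h₁)) (Set.Ioo z₂ (z₂ + h₂)) := by
  simp only [ItemRegion, Set.disjoint_prod]

lemma add_le_or_add_le_of_disjoint_Ioo {a b c d : ℝ} (hb : 0 < b) (hd : 0 < d)
    (hdisj : Disjoint (Set.Ioo a (a + b)) (Set.Ioo c (c + d))) : a + b ≤ c ∨ c + d ≤ a := by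
  rw [Set.Ioo_disjoint_Ioo, min_le_iff, le_max_iff, le_max_iff] at hdisj
  rcases hdisj with (h | h) | (h | h)
  · linarith
  · exact Or.inl h
  · exact Or.inr h
  · linarith

section Restack
variable {ι : Type*} (J : Finset ι) (z h : ι → ℝ)

/-- The condition `z j < z i` follows from the first one when `h j > 0`; it is there to make the
recursion in `restack` well-founded for arbitrary heights. -/
noncomputable def below (i : ι) : Finset ι :=
  J.filter fun j => z j + h j ≤ z i ∧ z j < z i

variable {J z h}

lemma card_filter_lt_lt_of_mem_below {i j : ι} (hj : j ∈ below J z h i) :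
    #(J.filter (z · < z j)) < #(J.filter (z · < z i)) := by
  rw [below, mem_filter] at hj
  refine card_lt_card ⟨fun k hk => ?_, fun hsub => ?_⟩
  · simp only [mem_filter] at hk ⊢
    exact ⟨hk.1, hk.2.trans hj.2.2⟩
  · simpa using hsub (mem_filter.mpr ⟨hj.1, hj.2.2⟩)

variable (J z h)

theorem below_induction {P : ι → Prop} (step : ∀ i, (∀ j ∈ below J z h i, P j) → P i)
    (i : ι) : P i :=
  (measure fun i => #(J.filter (z · < z i))).wf.induction i
    fun i ih => step i fun j hj => ih j (card_filter_lt_lt_of_mem_below hj)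

noncomputable def restack (h' γ : ι → ℝ) (i : ι) : ℝ :=
  ⌈(below J z h i).attach.fold max 0 (fun j : below J z h i => restack h' γ j + h' j) / γ i⌉₊ *
    γ i
termination_by #(J.filter (z · < z i))
decreasing_by exact card_filter_lt_lt_of_mem_below j.2

noncomputable def restackBase (h' γ : ι → ℝ) (i : ι) : ℝ :=
  (below J z h i).attach.fold max 0 (fun j : below J z h i => restack J z h h' γ j + h' j)

variable {J z h} {h' γ : ι → ℝ} {i : ι}

lemma restack_eq : restack J z h h' γ i = ⌈restackBase J z h h' γ i / γ i⌉₊ * γ i := by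
  rw [restack, restackBase]

lemma le_restackBase {j : ι} (hj : j ∈ below J z h i) :
    restack J z h h' γ j + h' j ≤ restackBase J z h h' γ i :=
  (le_fold_max _).mpr (Or.inr ⟨⟨j, hj⟩, mem_attach _ _, le_rfl⟩)

lemma restackBase_le {c : ℝ} (hc : 0 ≤ c)
    (hle : ∀ j ∈ below J z h i, restack J z h h' γ j + h' j ≤ c) :
    restackBase J z h h' γ i ≤ c :=
  (fold_max_le _).mpr ⟨hc, fun j _ => hle j j.2⟩

lemma restackBase_nonneg : 0 ≤ restackBase J z h h' γ i :=
  (le_fold_max _).mpr (Or.inl le_rfl)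

lemma restackBase_mem_multiples {g : ℝ}
    (hmul : ∀ j ∈ below J z h i, restack J z h h' γ j + h' j ∈ multiples g) :
    restackBase J z h h' γ i ∈ multiples g :=
  fold_max_induction (zero_mem _) fun j _ => hmul j j.2

lemma restackBase_le_restack (hγ : 0 < γ i) :
    restackBase J z h h' γ i ≤ restack J z h h' γ i := by
  rw [restack_eq]
  exact le_natCeil_div_mul hγ

lemma restack_lt (hγ : 0 < γ i) :
    restack J z h h' γ i < restackBase J z h h' γ i + γ i := by
  rw [restack_eq]
  exact natCeil_div_mul_lt restackBase_nonneg hγ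

lemma restack_nonneg (hγ : 0 < γ i) : 0 ≤ restack J z h h' γ i :=
  restackBase_nonneg.trans (restackBase_le_restack hγ)

lemma restack_mem_multiples : restack J z h h' γ i ∈ multiples (γ i) := by
  rw [restack_eq]
  exact natCeil_div_mul_mem_multiples _ _

lemma restack_eq_restackBase (hγ : 0 < γ i)
    (hmul : ∀ j ∈ below J z h i, restack J z h h' γ j + h' j ∈ multiples (γ i)) :
    restack J z h h' γ i = restackBase J z h h' γ i := by
  rw [restack_eq]
  exact natCeil_div_mul_eq_of_mem_multiples hγ.ne' (restackBase_mem_multiples hmul)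

lemma restack_add_mem_multiples {g : ℝ} (hγg : γ i ∈ multiples g)
    (hh' : h' i = ⌈h i / γ i⌉₊ * γ i) : restack J z h h' γ i + h' i ∈ multiples g := by
  rw [hh']
  exact add_mem (multiples_le.mpr hγg restack_mem_multiples)
    (multiples_le.mpr hγg (natCeil_div_mul_mem_multiples _ _))

lemma mem_below_of_add_le {j : ι} (hi : i ∈ J) (hh : 0 < h i) (hij : z i + h i ≤ z j) :
    i ∈ below J z h j :=
  mem_filter.mpr ⟨hi, hij, by linarith⟩

lemma add_le_restack_of_mem_below {j : ι} (hγ : 0 < γ j) (hi : i ∈ below J z h j) :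
    restack J z h h' γ i + h' i ≤ restack J z h h' γ j :=
  (le_restackBase hi).trans (restackBase_le_restack hγ)

theorem IsPacking.restack {w d x y : ι → ℝ} {W D H H' : ℝ}
    (hp : IsPacking J w d h W D H x y z) (hh : ∀ i ∈ J, 0 < h i) (hγ : ∀ i ∈ J, 0 < γ i)
    (htop : ∀ i ∈ J, restack J z h h' γ i + h' i ≤ H') :
    IsPacking J w d h' W D H' x y (restack J z h h' γ) := by
  refine ⟨fun i hi => ?_, fun i hi j hj hij => ?_⟩
  · obtain ⟨hx0, hxw, hy0, hyd, -, -⟩ := hp.1 i hi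
    exact ⟨hx0, hxw, hy0, hyd, restack_nonneg (hγ i hi), htop i hi⟩
  · refine disjoint_itemRegion_iff.mpr <| (disjoint_itemRegion_iff.mp (hp.2 i hi j hj hij)).imp
      id (Or.imp id fun hz => Set.Ioo_disjoint_Ioo.mpr ?_)
    rcases add_le_or_add_le_of_disjoint_Ioo (hh i hi) (hh j hj) hz with hle | hle
    · exact (min_le_left _ _).trans <| (add_le_restack_of_mem_below (hγ j hj)
        (mem_below_of_add_le hi (hh i hi) hle)).trans (le_max_right _ _)
    · exact (min_le_right _ _).trans <| (add_le_restack_of_mem_below (hγ i hi)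
        (mem_below_of_add_le hj (hh j hj) hle)).trans (le_max_left _ _)

theorem restack_add_le {S : Finset ι} {μ g : ℝ} (hμ : 0 ≤ μ) (hg : 0 ≤ g)
    (hz : ∀ i ∈ J, 0 ≤ z i) (hh : ∀ i ∈ J, 0 < h i) (hγ : ∀ i ∈ J, 0 < γ i)
    (hγg : ∀ i ∈ J, γ i ∈ multiples g) (hh' : ∀ i ∈ J, h' i = ⌈h i / γ i⌉₊ * γ i)
    (hS : ∀ i ∈ S, γ i = g) (hL : ∀ i ∈ J, i ∉ S → 2 * γ i ≤ μ * h i) (hi : i ∈ J) :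
    restack J z h h' γ i + h' i ≤
      (1 + μ) * (z i + h i) + g * #(S.filter fun k => z k + h k ≤ z i + h i) := by
  induction i using below_induction J z h with
  | step i ih =>
    set C : ι → Finset ι := fun k => S.filter fun l => z l + h l ≤ z k + h k
    have hbelow : ∀ j ∈ below J z h i,
        restack J z h h' γ j + h' j ≤ (1 + μ) * z i + g * #(C j) ∧ C j ⊆ C i := by
      intro j hj
      obtain ⟨hjJ, hji, -⟩ := mem_filter.mp hj
      refine ⟨(ih j hj hjJ).trans (by gcongr), fun k hk => ?_⟩
      simp only [C, mem_filter] at hk ⊢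
      exact ⟨hk.1, by linarith [hh i hi]⟩
    have hzi : 0 ≤ (1 + μ) * z i := mul_nonneg (by linarith) (hz i hi)
    have hrounding : h' i < h i + γ i := hh' i hi ▸ natCeil_div_mul_lt (hh i hi).le (hγ i hi)
    by_cases hiS : i ∈ S
    · have hγi := hS i hiS
      have hiC : i ∈ C i := mem_filter.mpr ⟨hiS, le_rfl⟩
      have hCi : (1 : ℝ) ≤ #(C i) := by exact_mod_cast card_pos.mpr ⟨i, hiC⟩
      have hbase : restackBase J z h h' γ i + g ≤ (1 + μ) * z i + g * #(C i) := by
        rw [← le_sub_iff_add_le]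
        refine restackBase_le (by nlinarith) fun j hj => ?_
        obtain ⟨hle, hsub⟩ := hbelow j hj
        have hiCj : i ∉ C j := by
          simp only [C, mem_filter, not_and, not_le]
          intro
          linarith [hh i hi, (mem_filter.mp hj).2.1]
        have hcard : (#(C j) : ℝ) + 1 ≤ #(C i) := by
          exact_mod_cast card_lt_card ⟨hsub, fun hsup => hiCj (hsup hiC)⟩
        nlinarith
      have hrestack : restack J z h h' γ i = restackBase J z h h' γ i :=
        restack_eq_restackBase (hγ i hi) fun j hj => hγi ▸
          restack_add_mem_multiples (hγg j (mem_filter.mp hj).1) (hh' j (mem_filter.mp hj).1)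
      nlinarith [hh i hi]
    · have hbase : restackBase J z h h' γ i ≤ (1 + μ) * z i + g * #(C i) := by
        refine restackBase_le (by positivity) fun j hj => (hbelow j hj).1.trans ?_
        gcongr
        exact (hbelow j hj).2
      have hlift : restack J z h h' γ i < restackBase J z h h' γ i + γ i := restack_lt (hγ i hi)
      nlinarith [hL i hi hiS]

end Restack

section GridStep
variable {ι : Type*} (J : Finset ι) (w d h : ι → ℝ) (μ : ℝ)

noncomputable def gridStep (i : ι) : ℝ :=
  if μ < w i ∧ μ < d i ∧ μ < h i then μ ^ 2 / 2 else μ / #J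

variable {J w d h μ}

lemma gridStep_pos (hμ : 0 < μ) (hJ : J.Nonempty) (i : ι) : 0 < gridStep J w d h μ i := by
  have : (0 : ℝ) < #J := by exact_mod_cast hJ.card_pos
  unfold gridStep
  split_ifs <;> positivity

lemma gridStep_mem_multiples {m : ℕ} (hJ : J.Nonempty) (hm : μ * #J = 2 * m) (i : ι) :
    gridStep J w d h μ i ∈ multiples (μ / #J) := by
  have : (0 : ℝ) < #J := by exact_mod_cast hJ.card_pos
  unfold gridStep
  split_ifs
  · refine (mem_multiples_iff _ _).mpr ⟨m, ?_⟩
    rw [nsmul_eq_mul, mul_div_assoc', div_eq_iff this.ne']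
    linear_combination (-μ / 2) * hm
  · exact mem_multiples _

theorem restack_gridStep_add_le {m : ℕ} {h' x y z : ι → ℝ} {W D : ℝ} (hμ : 0 < μ)
    (hJ : J.Nonempty) (hm : μ * #J = 2 * m) (hp : IsPacking J w d h W D 1 x y z)
    (hh : ∀ i ∈ J, 0 < h i)
    (hh' : ∀ i ∈ J, h' i = ⌈h i / gridStep J w d h μ i⌉₊ * gridStep J w d h μ i)
    {i : ι} (hi : i ∈ J) :
    restack J z h h' (gridStep J w d h μ) i + h' i ≤ 1 + 2 * μ := by
  have hJ' : (0 : ℝ) < #J := by exact_mod_cast hJ.card_pos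
  refine (restack_add_le (S := J.filter fun i => ¬(μ < w i ∧ μ < d i ∧ μ < h i)) hμ.le
    (div_pos hμ hJ').le (fun i hi => (hp.1 i hi).2.2.2.2.1) hh
    (fun i _ => gridStep_pos hμ hJ i) (fun i _ => gridStep_mem_multiples hJ hm i) hh'
    (fun i hi => if_neg (mem_filter.mp hi).2) (fun i hi hiS => ?_) hi).trans ?_
  · have hL : μ < w i ∧ μ < d i ∧ μ < h i := by simpa [hi] using hiS
    rw [gridStep, if_pos hL]
    nlinarith [hL.2.2]
  · calc _ ≤ (1 + μ) * 1 + μ / #J * #J := by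
          gcongr
          · exact (hp.1 i hi).2.2.2.2.2
          · exact (filter_subset _ _).trans (filter_subset _ _)
      _ = 1 + 2 * μ := by rw [div_mul_cancel₀ _ hJ'.ne']; ring

end GridStep

theorem stmt17_general {ι : Type*} (J : Finset ι) (w d h : ι → ℝ) (μ : ℝ)
    (hμpos : 0 < μ)
    (hn : J.Nonempty)
    (heven : ∃ m : ℕ, 0 < m ∧ μ * (J.card : ℝ) = 2 * (m : ℝ))
    (hdims : ∀ i ∈ J, 0 < w i ∧ w i ≤ 1 ∧ 0 < d i ∧ d i ≤ 1 ∧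
      0 < h i ∧ h i ≤ 1)
    (hpack : CanPack J w d h 1 1 1)
    (h' : ι → ℝ)
    (hlarge : ∀ i ∈ J, (μ < w i ∧ μ < d i ∧ μ < h i) →
      h' i = (⌈h i / (μ ^ 2 / 2)⌉₊ : ℝ) * (μ ^ 2 / 2))
    (hsmall : ∀ i ∈ J, ¬(μ < w i ∧ μ < d i ∧ μ < h i) →
      h' i = (⌈h i / (μ / (J.card : ℝ))⌉₊ : ℝ) * (μ / (J.card : ℝ))) :
    ∃ x y z : ι → ℝ, IsPacking J w d h' 1 1 (1 + 2 * μ) x y z ∧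
      (∀ i ∈ J, ∃ a : ℕ, z i = (a : ℝ) * (μ / (J.card : ℝ))) ∧
      (∀ i ∈ J, (μ < w i ∧ μ < d i ∧ μ < h i) →
        ∃ a : ℕ, z i = (a : ℝ) * (μ ^ 2 / 2)) := by
  obtain ⟨x, y, z, hp⟩ := hpack
  obtain ⟨m, -, hm⟩ := heven
  set γ := gridStep J w d h μ
  have hh : ∀ i ∈ J, 0 < h i := fun i hi => (hdims i hi).2.2.2.2.1
  have hh' : ∀ i ∈ J, h' i = ⌈h i / γ i⌉₊ * γ i := fun i hi => by
    simp only [γ, gridStep]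
    split_ifs with hL
    exacts [hlarge i hi hL, hsmall i hi hL]
  refine ⟨x, y, restack J z h h' γ,
    hp.restack hh (fun i _ => gridStep_pos hμpos hn i)
      (fun i hi => restack_gridStep_add_le hμpos hn hm hp hh hh' hi),
    fun i _ => ?_, fun i _ hL => ?_⟩
  · have hz : restack J z h h' γ i ∈ multiples (μ / #J) :=
      multiples_le.mpr (gridStep_mem_multiples hn hm i) restack_mem_multiples
    obtain ⟨a, ha⟩ := (mem_multiples_iff _ _).mp hz
    exact ⟨a, by rw [← ha, nsmul_eq_mul]⟩
  · have hz : restack J z h h' γ i ∈ multiples (γ i) := restack_mem_multiples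
    obtain ⟨a, ha⟩ := (mem_multiples_iff _ _).mp hz
    exact ⟨a, by rw [← ha, nsmul_eq_mul]; simp only [γ, gridStep, if_pos hL]⟩

/-- Discretizing heights and `z`-positions: suppose `J`
(with `n = |J| ≥ 1` items, all dimensions in `(0,1]`) packs into the unit
cube, and `μ ∈ (0,1]` is such that `μ·n` is an even positive integer. Call an
item *large* if all three of its dimensions exceed `μ`. If `h'` rounds the
height of every large item up to the next integer multiple of `μ²/2` and the
height of every other item up to the next integer multiple of `μ/n`, then `J`
with heights `h'` packs into `[0,1] × [0,1] × [0, 1+2μ]` with every item at a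
`z`-coordinate that is an integer multiple of `μ/n` and every large item at a
`z`-coordinate that is an integer multiple of `μ²/2`. -/
theorem stmt17 {ι : Type*} (J : Finset ι) (w d h : ι → ℝ) (μ : ℝ)
    (hμpos : 0 < μ) (hμle : μ ≤ 1)
    (hn : J.Nonempty)
    (heven : ∃ m : ℕ, 0 < m ∧ μ * (J.card : ℝ) = 2 * (m : ℝ))
    (hdims : ∀ i ∈ J, 0 < w i ∧ w i ≤ 1 ∧ 0 < d i ∧ d i ≤ 1 ∧
      0 < h i ∧ h i ≤ 1)
    (hpack : CanPack J w d h 1 1 1)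
    (h' : ι → ℝ)
    (hlarge : ∀ i ∈ J, (μ < w i ∧ μ < d i ∧ μ < h i) →
      h' i = (⌈h i / (μ ^ 2 / 2)⌉₊ : ℝ) * (μ ^ 2 / 2))
    (hsmall : ∀ i ∈ J, ¬(μ < w i ∧ μ < d i ∧ μ < h i) →
      h' i = (⌈h i / (μ / (J.card : ℝ))⌉₊ : ℝ) * (μ / (J.card : ℝ))) :
    ∃ x y z : ι → ℝ, IsPacking J w d h' 1 1 (1 + 2 * μ) x y z ∧
      (∀ i ∈ J, ∃ a : ℕ, z i = (a : ℝ) * (μ / (J.card : ℝ))) ∧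
      (∀ i ∈ J, (μ < w i ∧ μ < d i ∧ μ < h i) →
        ∃ a : ℕ, z i = (a : ℝ) * (μ ^ 2 / 2)) :=
  stmt17_general J w d h μ hμpos hn heven hdims hpack h' hlarge hsmall
end

section
/- Let I be a finite set of rectangles with widths and heights in (0,1] and total area A > 0, and let ε ∈ (0,1]. Define δ_0 = ε and δ_j = δ_{j−1}^4 for j ≥ 1, and let N = ⌈2/ε⌉. Then there exists an index j ∈ {1,…,N} such that the total area of the rectangles of I whose width lies in [δ_j, δ_{j−1}) or whose height lies in [δ_j, δ_{j−1}) is at most ε·A. -/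
open scoped Classical

/-!
Since `δⱼ = ε ^ 4 ^ j` is antitone, the intervals `[δⱼ, δⱼ₋₁)` are pairwise disjoint, so each
rectangle is counted in at most two of the `N` classes (once through its width, once through
its height). The `N` class areas therefore sum to at most `2A ≤ NεA`, and the smallest of them
is at most `εA`.
-/

open Finset

lemma eq_pow_pow_of_succ_eq_pow {δ : ℕ → ℝ} {n : ℕ} (hδ : ∀ j, δ (j + 1) = δ j ^ n) (j : ℕ) :
    δ j = δ 0 ^ n ^ j := by
  induction j with
  | zero => simp
  | succ j ih => rw [hδ, ih, ← pow_mul, pow_succ]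

lemma antitone_of_succ_eq_pow {δ : ℕ → ℝ} {n : ℕ} (hn : n ≠ 0) (h0 : 0 ≤ δ 0) (h1 : δ 0 ≤ 1)
    (hδ : ∀ j, δ (j + 1) = δ j ^ n) : Antitone δ := by
  intro j k hjk
  rw [eq_pow_pow_of_succ_eq_pow hδ j, eq_pow_pow_of_succ_eq_pow hδ k]
  exact pow_le_pow_of_le_one h0 h1 (Nat.pow_le_pow_right (Nat.pos_of_ne_zero hn) hjk)

/-- For `j = 0` the interval `[δ 0, δ (0 - 1))` is empty, so no condition on `s` is needed. -/
lemma card_filter_mem_Ico_pred_le_one {δ : ℕ → ℝ} (hδ : Antitone δ) (s : Finset ℕ) (x : ℝ) :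
    #(s.filter fun j => δ j ≤ x ∧ x < δ (j - 1)) ≤ 1 := by
  have key : ∀ j k, j < k → δ j ≤ x → x < δ (k - 1) → False := fun j k hjk hj hk =>
    (hk.trans_le (hδ (Nat.le_sub_one_of_lt hjk))).not_ge hj
  refine card_le_one.mpr fun j hj k hk => ?_
  simp only [mem_filter] at hj hk
  rcases lt_trichotomy j k with hjk | hjk | hjk
  · exact (key j k hjk hj.2.1 hk.2.2).elim
  · exact hjk
  · exact (key k j hjk hk.2.1 hj.2.2).elim

lemma card_filter_or_mem_Ico_pred_le_two {δ : ℕ → ℝ} (hδ : Antitone δ) (s : Finset ℕ)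
    (x y : ℝ) :
    #(s.filter fun j => (δ j ≤ x ∧ x < δ (j - 1)) ∨ (δ j ≤ y ∧ y < δ (j - 1))) ≤ 2 := by
  rw [filter_or]
  exact (card_union_le _ _).trans
    (add_le_add (card_filter_mem_Ico_pred_le_one hδ s x) (card_filter_mem_Ico_pred_le_one hδ s y))

lemma sum_sum_filter_le_mul_sum {κ ι : Type*} (J : Finset κ) (I : Finset ι) (P : κ → ι → Prop)
    [DecidableRel P] (a : ι → ℝ) (m : ℕ) (ha : ∀ i ∈ I, 0 ≤ a i)
    (hm : ∀ i ∈ I, #(J.filter fun j => P j i) ≤ m) :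
    ∑ j ∈ J, ∑ i ∈ I.filter (P j), a i ≤ m * ∑ i ∈ I, a i := by
  calc ∑ j ∈ J, ∑ i ∈ I.filter (P j), a i
      = ∑ i ∈ I, #(J.filter fun j => P j i) * a i := by
        simp_rw [sum_filter]
        rw [sum_comm]
        simp_rw [← sum_filter, sum_const, nsmul_eq_mul]
    _ ≤ ∑ i ∈ I, m * a i := sum_le_sum fun i hi =>
        mul_le_mul_of_nonneg_right (by exact_mod_cast hm i hi) (ha i hi)
    _ = m * ∑ i ∈ I, a i := (mul_sum _ _ _).symm

theorem stmt18_general {ι : Type*} (I : Finset ι) (w h : ι → ℝ) (ε : ℝ)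
    (hεpos : 0 < ε) (hεle : ε ≤ 1)
    (hdims : ∀ i ∈ I, 0 < w i ∧ w i ≤ 1 ∧ 0 < h i ∧ h i ≤ 1)
    (δ : ℕ → ℝ) (hδ0 : δ 0 = ε) (hδ : ∀ j, δ (j + 1) = (δ j) ^ 4) :
    ∃ j ∈ Finset.Icc 1 ⌈2 / ε⌉₊,
      ∑ i ∈ I.filter (fun i =>
          (δ j ≤ w i ∧ w i < δ (j - 1)) ∨ (δ j ≤ h i ∧ h i < δ (j - 1))),
        w i * h i ≤ ε * ∑ i ∈ I, w i * h i := by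
  have hanti : Antitone δ :=
    antitone_of_succ_eq_pow four_ne_zero (hδ0 ▸ hεpos.le) (hδ0 ▸ hεle) hδ
  have harea : ∀ i ∈ I, 0 ≤ w i * h i := fun i hi =>
    mul_nonneg (hdims i hi).1.le (hdims i hi).2.2.1.le
  have hN : (2 : ℝ) ≤ ⌈2 / ε⌉₊ * ε := by
    simpa [div_mul_cancel₀ _ hεpos.ne'] using
      mul_le_mul_of_nonneg_right (Nat.le_ceil (2 / ε)) hεpos.le
  have hJ : (Icc 1 ⌈2 / ε⌉₊).Nonempty :=
    nonempty_Icc.mpr (Nat.one_le_ceil_iff.mpr (by positivity))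
  refine exists_le_of_sum_le hJ ?_
  calc _ ≤ (2 : ℕ) * ∑ i ∈ I, w i * h i := sum_sum_filter_le_mul_sum _ _ _ _ 2 harea
        fun i _ => card_filter_or_mem_Ico_pred_le_two hanti _ (w i) (h i)
    _ ≤ ⌈2 / ε⌉₊ * ε * ∑ i ∈ I, w i * h i := by
        gcongr
        · exact sum_nonneg harea
        · exact_mod_cast hN
    _ = ∑ j ∈ Icc 1 ⌈2 / ε⌉₊, ε * ∑ i ∈ I, w i * h i := by
        rw [sum_const, Nat.card_Icc, nsmul_eq_mul, mul_assoc]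
        simp

/-- Shifting argument for rectangles: if the rectangles of
`I` have widths and heights in `(0,1]` and total area `A > 0`, `ε ∈ (0,1]`,
`δ₀ = ε`, `δⱼ = δ_{j-1}⁴`, and `N = ⌈2/ε⌉`, then for some `j ∈ {1,…,N}` the
total area of the rectangles whose width or height lies in `[δⱼ, δ_{j-1})`
is at most `ε·A`. -/
theorem stmt18 {ι : Type*} (I : Finset ι) (w h : ι → ℝ) (ε : ℝ)
    (hεpos : 0 < ε) (hεle : ε ≤ 1)
    (hdims : ∀ i ∈ I, 0 < w i ∧ w i ≤ 1 ∧ 0 < h i ∧ h i ≤ 1)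
    (hA : 0 < ∑ i ∈ I, w i * h i)
    (δ : ℕ → ℝ) (hδ0 : δ 0 = ε) (hδ : ∀ j, δ (j + 1) = (δ j) ^ 4) :
    ∃ j ∈ Finset.Icc 1 ⌈2 / ε⌉₊,
      ∑ i ∈ I.filter (fun i =>
          (δ j ≤ w i ∧ w i < δ (j - 1)) ∨ (δ j ≤ h i ∧ h i < δ (j - 1))),
        w i * h i ≤ ε * ∑ i ∈ I, w i * h i :=
  stmt18_general I w h ε hεpos hεle hdims δ hδ0 hδ
end
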